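/- arXiv:1912.01904 — 4 statements merged into one kernel-verified Lean document; each statement's English description precedes it below -/
import Mathlib

section
/- Let e₁, …, eₙ and τ₁, …, τₙ be vectors in ℝ² with each family nonzero and pairwise non-parallel, n ≥ 3. Suppose J ⊆ {1,…,n}, |J| ≥ 2, is of maximum size such that span_ℤ({τⱼ : j ∈ J} ∪ {e_{j'} : j' ∉ J}) is discrete. Then J is maximal with the property that T(J) = span_ℤ{τⱼ : j ∈ J} is discrete. -/
/-!
Write Λ(K) for the span of `τ '' K ∪ e '' Kᶜ`. Two non-parallel `τ j`, `j ∈ J`, span a lattice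
inside `T(J)`; if `T(J')` is discrete for some `J' ⊇ J`, pigeonholing the fractional parts of the
multiples of an element of `T(J')` in a fundamental parallelogram shows that each element has a
nonzero integer multiple in that lattice. Since `Λ(J')` is finitely generated, a single `N ≠ 0`
gives `N • Λ(J') ⊆ Λ(J)`, and multiplication by `N` is injective, so `Λ(J')` is discrete as well;
maximality of `|J|` then forces `J' = J`.
-/

open Set

theorem AddSubgroup.exists_zsmul_mem_closure_basis_of_discreteTopology {E ι : Type*}
    [NormedAddCommGroup E] [NormedSpace ℝ E] [ProperSpace E] [Fintype ι]
    (b : Module.Basis ι ℝ E) {G : AddSubgroup E} [DiscreteTopology G] (hb : ∀ i, b i ∈ G)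
    {x : E} (hx : x ∈ G) : ∃ N : ℤ, N ≠ 0 ∧ N • x ∈ AddSubgroup.closure (range b) := by
  have hspan : (Submodule.span ℤ (range b)).toAddSubgroup ≤ G := by
    rw [Submodule.span_int_eq_addSubgroupClosure, closure_le]
    rintro _ ⟨i, rfl⟩
    exact hb i
  have hfin : (ZSpan.fundamentalDomain b ∩ G).Finite :=
    Metric.finite_isBounded_inter_isClosed DiscreteTopology.isDiscrete
      (ZSpan.fundamentalDomain_isBounded b) isClosed_of_discrete
  have hmaps : MapsTo (fun k : ℕ => ZSpan.fract b ((k : ℤ) • x)) univ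
      (ZSpan.fundamentalDomain b ∩ G) := fun k _ =>
    ⟨ZSpan.fract_mem_fundamentalDomain b _,
      sub_mem (zsmul_mem hx _) (hspan (ZSpan.floor b _).2)⟩
  obtain ⟨k, -, l, -, hkl, heq⟩ := infinite_univ.exists_ne_map_eq_of_mapsTo hmaps hfin
  refine ⟨l - k, by omega, ?_⟩
  rw [ZSpan.fract_eq_fract, neg_add_eq_sub, ← sub_smul] at heq
  rwa [← Submodule.span_int_eq_addSubgroupClosure]

theorem AddSubgroup.exists_zsmul_mem_closure_of_linearIndependent {E ι : Type*}
    [NormedAddCommGroup E] [NormedSpace ℝ E] [FiniteDimensional ℝ E] [Fintype ι] {v : ι → E}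
    (hv : LinearIndependent ℝ v) (hcard : Fintype.card ι = Module.finrank ℝ E)
    {G : AddSubgroup E} [DiscreteTopology G] (hvG : ∀ i, v i ∈ G) {x : E} (hx : x ∈ G) :
    ∃ N : ℤ, N ≠ 0 ∧ N • x ∈ AddSubgroup.closure (range v) := by
  simpa using exists_zsmul_mem_closure_basis_of_discreteTopology
    (basisOfLinearIndependentOfCardEqFinrank' v hv hcard) (G := G) (by simpa using hvG) hx

theorem AddSubgroup.exists_zsmul_mem_of_mem_closure {M : Type*} [AddCommGroup M] {S : Set M}
    (hS : S.Finite) {H : AddSubgroup M} (h : ∀ s ∈ S, ∃ N : ℤ, N ≠ 0 ∧ N • s ∈ H) :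
    ∃ N : ℤ, N ≠ 0 ∧ ∀ y ∈ closure S, N • y ∈ H := by
  classical
  choose! N hN0 hNmem using h
  refine ⟨∏ s ∈ hS.toFinset, N s, Finset.prod_ne_zero_iff.mpr fun s hs => hN0 s
    (hS.mem_toFinset.mp hs), fun y hy => ?_⟩
  suffices closure S ≤ H.comap (zsmulAddGroupHom (∏ s ∈ hS.toFinset, N s)) from this hy
  rw [closure_le]
  intro s hs
  obtain ⟨c, hc⟩ := Finset.dvd_prod_of_mem N (hS.mem_toFinset.mpr hs)
  simpa [hc, mul_comm, mul_smul] using zsmul_mem (hNmem s hs) c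

theorem AddSubgroup.discreteTopology_of_zsmul_mem {M : Type*} [AddCommGroup M]
    [TopologicalSpace M] [IsTopologicalAddGroup M] [IsAddTorsionFree M] {H K : AddSubgroup M}
    [DiscreteTopology H] {N : ℤ} (hN : N ≠ 0) (h : ∀ y ∈ K, N • y ∈ H) : DiscreteTopology K :=
  DiscreteTopology.of_continuous_injective (f := fun y : K => (⟨N • y, h y y.2⟩ : H))
    (by fun_prop) fun y z hyz => Subtype.ext (zsmul_right_injective hN (congrArg Subtype.val hyz))

theorem maximum_J_is_maximal_for_T_general
    {n : ℕ} (e τ : Fin n → ℝ × ℝ)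
    (hτnz : ∀ i, τ i ≠ 0)
    (hτnp : ∀ i j, i ≠ j → ∀ c : ℝ, τ i ≠ c • τ j)
    (J : Finset (Fin n)) (hJ2 : 2 ≤ J.card)
    (hJdisc : DiscreteTopology
      ↥(AddSubgroup.closure (τ '' J ∪ e '' (Jᶜ : Finset (Fin n)))))
    (hJmaxsize : ∀ J' : Finset (Fin n),
      DiscreteTopology ↥(AddSubgroup.closure (τ '' J' ∪ e '' (J'ᶜ : Finset (Fin n)))) →
      J'.card ≤ J.card) :
    DiscreteTopology ↥(AddSubgroup.closure (τ '' J)) ∧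
    ∀ J' : Finset (Fin n), J ⊆ J' →
      DiscreteTopology ↥(AddSubgroup.closure (τ '' J')) → J' = J := by
  have hTΛ : AddSubgroup.closure (τ '' J) ≤
      AddSubgroup.closure (τ '' J ∪ e '' (Jᶜ : Finset (Fin n))) :=
    AddSubgroup.closure_mono subset_union_left
  refine ⟨DiscreteTopology.of_subset hJdisc hTΛ, fun J' hJJ' hJ'disc => ?_⟩
  obtain ⟨j₁, hj₁, j₂, hj₂, hne⟩ := Finset.one_lt_card.mp hJ2
  have hli : LinearIndependent ℝ ![τ j₁, τ j₂] :=
    LinearIndependent.pair_iff' (hτnz j₁) |>.mpr fun c hc => hτnp j₂ j₁ hne.symm c hc.symm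
  have hbJ : range ![τ j₁, τ j₂] ⊆ τ '' J := by
    rintro _ ⟨i, rfl⟩
    fin_cases i
    exacts [⟨j₁, hj₁, rfl⟩, ⟨j₂, hj₂, rfl⟩]
  have hgen : ∀ g ∈ τ '' J' ∪ e '' (J'ᶜ : Finset (Fin n)), ∃ N : ℤ, N ≠ 0 ∧
      N • g ∈ AddSubgroup.closure (τ '' J ∪ e '' (Jᶜ : Finset (Fin n))) := by
    rintro _ (⟨j, hj, rfl⟩ | ⟨j, hj, rfl⟩)
    · obtain ⟨N, hN, hNmem⟩ := AddSubgroup.exists_zsmul_mem_closure_of_linearIndependent hli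
        (by simp) (fun i => AddSubgroup.subset_closure (image_mono hJJ' (hbJ ⟨i, rfl⟩)))
        (AddSubgroup.subset_closure ⟨j, hj, rfl⟩)
      exact ⟨N, hN, hTΛ (AddSubgroup.closure_mono hbJ hNmem)⟩
    · refine ⟨1, one_ne_zero, ?_⟩
      rw [one_smul]
      have hjJ : j ∈ Jᶜ := Finset.compl_subset_compl.mpr hJJ' (by simpa using hj)
      exact AddSubgroup.subset_closure (Or.inr ⟨j, by simpa using hjJ, rfl⟩)
  obtain ⟨N, hN, hNmem⟩ := AddSubgroup.exists_zsmul_mem_of_mem_closure (toFinite _) hgen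
  have hJ'Λdisc := AddSubgroup.discreteTopology_of_zsmul_mem hN hNmem
  exact (Finset.eq_of_subset_of_card_le hJJ' (hJmaxsize J' hJ'Λdisc)).symm

theorem maximum_J_is_maximal_for_T
    {n : ℕ} (hn : 3 ≤ n) (e τ : Fin n → ℝ × ℝ)
    (henz : ∀ i, e i ≠ 0) (hτnz : ∀ i, τ i ≠ 0)
    (henp : ∀ i j, i ≠ j → ∀ c : ℝ, e i ≠ c • e j)
    (hτnp : ∀ i j, i ≠ j → ∀ c : ℝ, τ i ≠ c • τ j)
    (J : Finset (Fin n)) (hJ2 : 2 ≤ J.card)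
    (hJdisc : DiscreteTopology
      ↥(AddSubgroup.closure (τ '' J ∪ e '' (Jᶜ : Finset (Fin n)))))
    (hJmaxsize : ∀ J' : Finset (Fin n),
      DiscreteTopology ↥(AddSubgroup.closure (τ '' J' ∪ e '' (J'ᶜ : Finset (Fin n)))) →
      J'.card ≤ J.card) :
    DiscreteTopology ↥(AddSubgroup.closure (τ '' J)) ∧
    ∀ J' : Finset (Fin n), J ⊆ J' →
      DiscreteTopology ↥(AddSubgroup.closure (τ '' J')) → J' = J :=
  maximum_J_is_maximal_for_T_general e τ hτnz hτnp J hJ2 hJdisc hJmaxsize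
end

section
/- If J, J' ⊆ [n] with J ⊆ J', T(J) is a lattice, T(J') is discrete, and T(J) + E([n] \ J) is a lattice, then T(J') + E([n] \ J) is also a lattice. -/
/-!
`T(J)` spans `ℝ²` and lies in the discrete group `T(J')`; both are then `ℤ`-lattices of rank 2, so
`T(J') / T(J)` is torsion and every `τⱼ` with `j ∈ J'` has a nonzero multiple in `T(J)`. If `k` is
the product of these multipliers, then `k • (T(J') + E(Jᶜ)) ⊆ T(J) + E(Jᶜ)`, so `T(J') + E(Jᶜ)` lies
in the preimage of a discrete group under the injective map `x ↦ k • x`.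
-/

/-- A lattice in `ℝ²`: a discrete subgroup containing two linearly independent vectors. -/
def IsLattice (L : AddSubgroup (ℝ × ℝ)) : Prop :=
  DiscreteTopology ↥L ∧ ∃ v ∈ L, ∃ w ∈ L, LinearIndependent ℝ ![v, w]

open Module

theorem Submodule.exists_smul_mem_of_finrank_eq {R M : Type*} [CommRing R] [IsDomain R]
    [AddCommGroup M] [Module R M] [Module.Finite R M] {N : Submodule R M}
    (hN : finrank R N = finrank R M) (x : M) : ∃ a : R, a ≠ 0 ∧ a • x ∈ N := by
  have hquot : finrank R (M ⧸ N) = 0 := by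
    have := N.finrank_quotient_add_finrank
    omega
  obtain ⟨a, ha, hax⟩ := Module.finrank_eq_zero_iff.mp hquot (N.mkQ x)
  exact ⟨a, ha, (Submodule.Quotient.mk_eq_zero N).mp (by rwa [← map_smul] at hax)⟩

theorem AddSubgroup.exists_zsmul_mem_of_le_of_span_eq_top {E : Type*} [NormedAddCommGroup E]
    [NormedSpace ℝ E] [FiniteDimensional ℝ E] {H K : AddSubgroup E} [hK : DiscreteTopology K]
    (hHK : H ≤ K) (hH : Submodule.span ℝ (H : Set E) = ⊤) {v : E} (hv : v ∈ K) :
    ∃ c : ℤ, c ≠ 0 ∧ c • v ∈ H := by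
  set H' := H.toIntSubmodule
  set K' := K.toIntSubmodule
  have hH'K' : H' ≤ K' := hHK
  have : DiscreteTopology H' := DiscreteTopology.of_subset hK hHK
  have : DiscreteTopology K' := hK
  have : IsZLattice ℝ H' := ⟨hH⟩
  have : IsZLattice ℝ K' := ⟨eq_top_iff.mpr (hH ▸ Submodule.span_mono hHK)⟩
  have hrank : finrank ℤ (H'.comap K'.subtype) = finrank ℤ K' := by
    rw [(Submodule.comapSubtypeEquivOfLe hH'K').finrank_eq, ZLattice.rank ℝ H', ZLattice.rank ℝ K']
  exact Submodule.exists_smul_mem_of_finrank_eq hrank ⟨v, hv⟩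

theorem AddSubgroup.exists_closure_le_comap_zsmul {G : Type*} [AddCommGroup G] {s : Set G}
    (hs : s.Finite) {L : AddSubgroup G} (h : ∀ x ∈ s, ∃ c : ℤ, c ≠ 0 ∧ c • x ∈ L) :
    ∃ k : ℤ, k ≠ 0 ∧ closure s ≤ L.comap (zsmulAddGroupHom k) := by
  choose! c hc0 hcL using h
  refine ⟨∏ x ∈ hs.toFinset, c x, Finset.prod_ne_zero_iff.mpr fun x hx ↦ hc0 x (by simpa using hx),
    (closure_le _).mpr fun x hx ↦ ?_⟩
  obtain ⟨d, hd⟩ := Finset.dvd_prod_of_mem c (hs.mem_toFinset.mpr hx)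
  change (∏ x ∈ hs.toFinset, c x) • x ∈ L
  rw [hd, mul_comm, mul_smul]
  exact zsmul_mem (hcL x hx) d

theorem AddSubgroup.discreteTopology_comap_zsmul {G : Type*} [AddCommGroup G] [TopologicalSpace G]
    [IsTopologicalAddGroup G] [IsAddTorsionFree G] (L : AddSubgroup G) [DiscreteTopology L]
    {k : ℤ} (hk : k ≠ 0) : DiscreteTopology (L.comap (zsmulAddGroupHom k)) :=
  DiscreteTopology.preimage_of_continuous_injective (L : Set G) (continuous_zsmul k)
    (zsmul_right_injective hk)

theorem IsLattice.span_eq_top {L : AddSubgroup (ℝ × ℝ)} (hL : IsLattice L) :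
    Submodule.span ℝ (L : Set (ℝ × ℝ)) = ⊤ := by
  obtain ⟨-, v, hv, w, hw, hvw⟩ := hL
  refine eq_top_iff.mpr <|
    (hvw.span_eq_top_of_card_eq_finrank (by simp)).ge.trans (Submodule.span_mono ?_)
  rintro _ ⟨i, rfl⟩
  fin_cases i <;> simpa

theorem IsLattice.of_le_comap_zsmul {L M : AddSubgroup (ℝ × ℝ)} (hL : IsLattice L) (hLM : L ≤ M)
    {k : ℤ} (hk : k ≠ 0) (hM : M ≤ L.comap (zsmulAddGroupHom k)) : IsLattice M := by
  obtain ⟨hdisc, v, hv, w, hw, hvw⟩ := hL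
  exact ⟨DiscreteTopology.of_subset (L.discreteTopology_comap_zsmul hk) hM,
    v, hLM hv, w, hLM hw, hvw⟩

theorem enlarge_T_preserves_lattice
    {n : ℕ} (e τ : Fin n → ℝ × ℝ)
    (J J' : Finset (Fin n)) (hJJ' : J ⊆ J')
    (hTJ : IsLattice (AddSubgroup.closure (τ '' J)))
    (hTJ' : DiscreteTopology ↥(AddSubgroup.closure (τ '' J')))
    (hL : IsLattice (AddSubgroup.closure (τ '' J) ⊔
      AddSubgroup.closure (e '' (Jᶜ : Finset (Fin n))))) :
    IsLattice (AddSubgroup.closure (τ '' J') ⊔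
      AddSubgroup.closure (e '' (Jᶜ : Finset (Fin n)))) := by
  have hT : AddSubgroup.closure (τ '' J) ≤ AddSubgroup.closure (τ '' J') :=
    AddSubgroup.closure_mono (Set.image_mono (Finset.coe_subset.mpr hJJ'))
  have hmul : ∀ x ∈ τ '' J' ∪ e '' (Jᶜ : Finset (Fin n)), ∃ c : ℤ, c ≠ 0 ∧
      c • x ∈ AddSubgroup.closure (τ '' J) ⊔ AddSubgroup.closure (e '' (Jᶜ : Finset (Fin n))) := by
    rintro x (hx | hx)
    · obtain ⟨c, hc, hcx⟩ := AddSubgroup.exists_zsmul_mem_of_le_of_span_eq_top hT hTJ.span_eq_top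
        (AddSubgroup.subset_closure hx)
      exact ⟨c, hc, AddSubgroup.mem_sup_left hcx⟩
    · exact ⟨1, one_ne_zero,
        by simpa using AddSubgroup.mem_sup_right (AddSubgroup.subset_closure hx)⟩
  obtain ⟨k, hk, hle⟩ := AddSubgroup.exists_closure_le_comap_zsmul (Set.toFinite _) hmul
  rw [AddSubgroup.closure_union] at hle
  exact hL.of_le_comap_zsmul (sup_le_sup_right hT _) hk hle
end

section
/- Let v, w ∈ ℝ² be linearly independent over ℝ and u ∈ ℝ². Then span_ℤ{v, w, u} is discrete if and only if both coordinates of u with respect to the basis (v, w) are rational. -/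
/-!
If the coordinates of `u` in a basis `(b i)` are rationals `q i`, then every `b i` and `u` lie in
the lattice spanned by the vectors `(q i).den⁻¹ • b i`, and a subgroup of a lattice is discrete.
Conversely, a discrete subgroup containing a basis of an `n`-dimensional space is a lattice of
rank `n`, so the `n + 1` vectors `u, b 1, …, b n` satisfy a nontrivial integer relation. Since
the `b i` are linearly independent over `ℝ`, the coefficient of `u` in it is nonzero, and solving
for `u` exhibits its coordinates as quotients of integers.
-/

open Submodule Module

variable {E ι : Type*} [Fintype ι]

theorem Module.Basis.exists_rat_eq_of_not_linearIndependent_int [AddCommGroup E] [Module ℝ E]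
    (b : Basis ι ℝ E) (c : ι → ℝ)
    (h : ¬ LinearIndependent ℤ (fun o : Option ι => o.elim (∑ i, c i • b i) b)) (i : ι) :
    ∃ q : ℚ, c i = q := by
  obtain ⟨g, hg, o, ho⟩ := Fintype.not_linearIndependent_iff.mp h
  have hrel : ∑ i, ((g none : ℝ) * c i + g (some i)) • b i = 0 := by
    simp only [Fintype.sum_option, Option.elim_none, Option.elim_some, Finset.smul_sum,
      smul_smul, ← Int.cast_smul_eq_zsmul ℝ] at hg
    simpa only [add_smul, Finset.sum_add_distrib] using hg
  have hcoef := Fintype.linearIndependent_iff.mp b.linearIndependent _ hrel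
  have hnone : g none ≠ 0 := by
    rintro h0
    refine ho ?_
    cases o with
    | none => exact h0
    | some j => exact_mod_cast (by simpa [h0] using hcoef j : (g (some j) : ℝ) = 0)
  refine ⟨-(g (some i)) / g none, ?_⟩
  push_cast
  field_simp
  linarith [hcoef i]

variable [NormedAddCommGroup E] [NormedSpace ℝ E]

theorem Module.Basis.not_linearIndependent_int_of_discreteTopology [FiniteDimensional ℝ E]
    (b : Basis ι ℝ E) (u : E)
    (h : DiscreteTopology (AddSubgroup.closure (insert u (Set.range b)))) :
    ¬ LinearIndependent ℤ (fun o : Option ι => o.elim u b) := by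
  set L := span ℤ (insert u (Set.range b))
  have : DiscreteTopology L := by rwa [← span_int_eq_addSubgroupClosure] at h
  have : IsZLattice ℝ L := ⟨eq_top_iff.mpr <| b.span_eq.ge.trans <|
    span_mono <| (Set.subset_insert _ _).trans subset_span⟩
  rw [linearIndependent_iff_card_le_finrank_span, Option.range_elim, Set.finrank,
    ZLattice.rank ℝ L, finrank_eq_card_basis b]
  simp

theorem Module.Basis.discreteTopology_closure_insert_sum_rat_smul (b : Basis ι ℝ E) (q : ι → ℚ) :
    DiscreteTopology (AddSubgroup.closure (insert (∑ i, (q i : ℝ) • b i) (Set.range b))) := by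
  let b' := b.unitsSMul fun i => (Units.mk0 ((q i).den : ℝ) (by positivity))⁻¹
  have hb : ∀ i, b i = ((q i).den : ℤ) • b' i := fun i => by
    simp [b', Basis.unitsSMul_apply, Units.smul_def, ← Int.cast_smul_eq_zsmul ℝ, smul_smul]
  have hu : ∑ i, (q i : ℝ) • b i = ∑ i, (q i).num • b' i := by
    refine Finset.sum_congr rfl fun i _ => ?_
    simp [b', Basis.unitsSMul_apply, Units.smul_def, ← Int.cast_smul_eq_zsmul ℝ, smul_smul,
      Rat.cast_def, div_eq_mul_inv]
  have hle : AddSubgroup.closure (insert (∑ i, (q i : ℝ) • b i) (Set.range b)) ≤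
      (span ℤ (Set.range b')).toAddSubgroup := by
    rw [AddSubgroup.closure_le, Set.insert_subset_iff, Set.range_subset_iff, hu]
    exact ⟨sum_mem fun i _ => zsmul_mem (subset_span (Set.mem_range_self i)) _,
      fun i => hb i ▸ zsmul_mem (subset_span (Set.mem_range_self i)) _⟩
  exact DiscreteTopology.of_subset (inferInstance : DiscreteTopology (span ℤ (Set.range b'))) hle

theorem Module.Basis.discreteTopology_closure_insert_sum_smul_iff [FiniteDimensional ℝ E]
    (b : Basis ι ℝ E) (c : ι → ℝ) :
    DiscreteTopology (AddSubgroup.closure (insert (∑ i, c i • b i) (Set.range b))) ↔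
      ∀ i, ∃ q : ℚ, c i = q := by
  refine ⟨fun h => b.exists_rat_eq_of_not_linearIndependent_int c
    (b.not_linearIndependent_int_of_discreteTopology _ h), fun h => ?_⟩
  choose q hq using h
  obtain rfl : c = fun i => (q i : ℝ) := funext hq
  exact b.discreteTopology_closure_insert_sum_rat_smul q

theorem span_three_discrete_iff_rational_coords
    (v w u : ℝ × ℝ) (hvw : LinearIndependent ℝ ![v, w])
    (α β : ℝ) (hu : u = α • v + β • w) :
    DiscreteTopology ↥(AddSubgroup.closure {v, w, u}) ↔
      (∃ q : ℚ, α = (q : ℝ)) ∧ (∃ q : ℚ, β = (q : ℝ)) := by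
  let b : Basis (Fin 2) ℝ (ℝ × ℝ) := basisOfLinearIndependentOfCardEqFinrank hvw (by simp)
  have hb : ⇑b = ![v, w] := coe_basisOfLinearIndependentOfCardEqFinrank _ _
  have hset : ({v, w, u} : Set (ℝ × ℝ)) = insert (∑ i, ![α, β] i • b i) (Set.range b) := by
    simp only [hb, Fin.sum_univ_two, Matrix.cons_val_zero, Matrix.cons_val_one, ← hu,
      Matrix.range_cons, Matrix.range_empty, Set.union_empty, Set.union_singleton]
    ext
    simp only [Set.mem_insert_iff, Set.mem_singleton_iff]
    tauto
  rw [hset, b.discreteTopology_closure_insert_sum_smul_iff, Fin.forall_fin_two]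
  rfl
end

section
/- Let v₁, …, v_k ∈ ℝ² be vectors spanning ℝ² over ℝ, and pick v_i, v_j forming an ℝ-basis. Then span_ℤ{v₁, …, v_k} is discrete if and only if for every m, the coordinates of v_m with respect to the basis (v_i, v_j) are rational. -/
open Submodule Module

/-! If the `ℤ`-span `L` of the `v m` is discrete, it is a lattice of rank `2` containing the basis
`b = (v i, v j)`; so `b` together with any `v m` is `ℤ`-linearly dependent, and since `b` is
independent the relation expresses `v m` over `ℚ` in terms of `b`. Conversely, if every `v m` lies
in the `ℚ`-span of `b`, a common denominator `n` makes `x ↦ n • x` an injective continuous map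
from `L` into the discrete lattice spanned by `b` over `ℤ`. -/

theorem exists_nsmul_mem_span_int_of_mem_span_rat {M : Type*} [AddCommGroup M] [Module ℚ M]
    {s : Set M} {x : M} (hx : x ∈ span ℚ s) : ∃ n : ℕ, n ≠ 0 ∧ n • x ∈ span ℤ s := by
  induction hx using span_induction with
  | mem y hy => exact ⟨1, one_ne_zero, by simpa using subset_span hy⟩
  | zero => exact ⟨1, one_ne_zero, by simp⟩
  | add y z _ _ hy hz =>
    obtain ⟨n, hn, hny⟩ := hy
    obtain ⟨m, hm, hmz⟩ := hz
    refine ⟨n * m, mul_ne_zero hn hm, ?_⟩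
    rw [smul_add, mul_comm, mul_smul, mul_comm, mul_smul]
    exact add_mem (nsmul_mem hny m) (nsmul_mem hmz n)
  | smul q y _ hy =>
    obtain ⟨n, hn, hny⟩ := hy
    refine ⟨q.den * n, mul_ne_zero q.den_nz hn, ?_⟩
    have : (q.den : ℕ) • q • y = q.num • y := by
      rw [← Nat.cast_smul_eq_nsmul ℚ, smul_smul, Rat.den_mul_eq_num, Int.cast_smul_eq_zsmul]
    rw [mul_comm, mul_smul, this, smul_comm]
    exact zsmul_mem hny _

theorem exists_nsmul_mem_span_int_of_forall_mem_span_rat {M ι : Type*} [AddCommGroup M]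
    [Module ℚ M] [Finite ι] {s : Set M} {v : ι → M} (hv : ∀ m, v m ∈ span ℚ s) :
    ∃ n : ℕ, n ≠ 0 ∧ ∀ x ∈ span ℤ (Set.range v), n • x ∈ span ℤ s := by
  cases nonempty_fintype ι
  choose n hn hnv using fun m ↦ exists_nsmul_mem_span_int_of_mem_span_rat (hv m)
  refine ⟨∏ m, n m, Finset.prod_ne_zero_iff.mpr fun m _ ↦ hn m, fun x hx ↦ ?_⟩
  suffices span ℤ (Set.range v) ≤ (span ℤ s).comap ((∏ m, n m) • LinearMap.id) from this hx
  refine span_le.mpr ?_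
  rintro _ ⟨m, rfl⟩
  obtain ⟨c, hc⟩ := Finset.dvd_prod_of_mem n (Finset.mem_univ m)
  rw [SetLike.mem_coe, mem_comap, LinearMap.smul_apply, LinearMap.id_apply, hc, mul_comm, mul_smul]
  exact nsmul_mem (hnv m) c

theorem discreteTopology_span_int_of_mem_span_rat {E ι ι' : Type*} [NormedAddCommGroup E]
    [NormedSpace ℝ E] [Module ℚ E] [Finite ι] [Finite ι'] (b : Basis ι ℝ E) {v : ι' → E}
    (hv : ∀ m, v m ∈ span ℚ (Set.range b)) : DiscreteTopology (span ℤ (Set.range v)) := by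
  obtain ⟨n, hn, hnL⟩ := exists_nsmul_mem_span_int_of_forall_mem_span_rat hv
  have : IsAddTorsionFree E := .of_module_rat E
  let f : span ℤ (Set.range v) → span ℤ (Set.range b) := fun x ↦ ⟨n • x, hnL x x.2⟩
  refine DiscreteTopology.of_continuous_injective (f := f) (by fun_prop) fun x y hxy ↦ ?_
  exact Subtype.ext (IsAddTorsionFree.nsmul_right_injective hn (congrArg Subtype.val hxy))

theorem mem_span_rat_of_discreteTopology {E ι : Type*} [NormedAddCommGroup E] [NormedSpace ℝ E]
    [FiniteDimensional ℝ E] [Module ℚ E] [Fintype ι] (b : Basis ι ℝ E) (L : Submodule ℤ E)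
    [DiscreteTopology L] (hb : Set.range b ⊆ L) {x : E} (hx : x ∈ L) :
    x ∈ span ℚ (Set.range b) := by
  have : IsZLattice ℝ L := ⟨eq_top_mono (span_mono hb) b.span_eq⟩
  have hrank : finrank ℤ L = Fintype.card ι := by
    rw [ZLattice.rank ℝ L, finrank_eq_card_basis b]
  let f : Option ι → L := fun o ↦ Option.casesOn' o ⟨x, hx⟩ fun t ↦ ⟨b t, hb ⟨t, rfl⟩⟩
  have hf : ¬ LinearIndependent ℤ f := fun h ↦ by
    simpa [hrank] using h.fintype_card_le_finrank
  have hf' : ¬ LinearIndependent ℚ (fun o ↦ Option.casesOn' o x b : Option ι → E) := by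
    rw [← LinearIndependent.iff_fractionRing ℤ ℚ]
    have hcomp : L.subtype ∘ f = fun o ↦ Option.casesOn' o x b := by ext (_ | _) <;> rfl
    exact fun h ↦ hf (LinearIndependent.of_comp L.subtype (hcomp ▸ h))
  rw [linearIndependent_option', not_and, not_not] at hf'
  exact hf' (b.linearIndependent.restrict_scalars' ℚ)

theorem mem_span_rat_pair_iff {E : Type*} [AddCommGroup E] [Module ℝ E] [Module ℚ E]
    {x a b : E} :
    x ∈ span ℚ {a, b} ↔ ∃ α β : ℚ, x = (α : ℝ) • a + (β : ℝ) • b := by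
  simp only [Submodule.mem_span_pair, Rat.cast_smul_eq_qsmul ℝ, @eq_comm _ x]

theorem span_discrete_iff_rational_coords_general
    {k : ℕ} (v : Fin k → ℝ × ℝ)
    (i j : Fin k) (hij : LinearIndependent ℝ ![v i, v j]) :
    DiscreteTopology ↥(AddSubgroup.closure (Set.range v)) ↔
      ∀ m : Fin k, ∃ α β : ℚ, v m = (α : ℝ) • v i + (β : ℝ) • v j := by
  let b : Basis (Fin 2) ℝ (ℝ × ℝ) :=
    basisOfLinearIndependentOfCardEqFinrank hij (by simp [finrank_prod])
  have hb : Set.range b = {v i, v j} := by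
    rw [coe_basisOfLinearIndependentOfCardEqFinrank, Matrix.range_cons_cons_empty]
  simp_rw [← mem_span_rat_pair_iff]
  rw [← hb, ← span_int_eq_addSubgroupClosure]
  constructor
  · intro _ m
    refine mem_span_rat_of_discreteTopology b (span ℤ (Set.range v)) ?_ (subset_span ⟨m, rfl⟩)
    rw [hb]
    exact Set.pair_subset (subset_span ⟨i, rfl⟩) (subset_span ⟨j, rfl⟩)
  · exact discreteTopology_span_int_of_mem_span_rat b

theorem span_discrete_iff_rational_coords
    {k : ℕ} (v : Fin k → ℝ × ℝ)
    (hspan : Submodule.span ℝ (Set.range v) = ⊤)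
    (i j : Fin k) (hij : LinearIndependent ℝ ![v i, v j]) :
    DiscreteTopology ↥(AddSubgroup.closure (Set.range v)) ↔
      ∀ m : Fin k, ∃ α β : ℚ, v m = (α : ℝ) • v i + (β : ℝ) • v j :=
  span_discrete_iff_rational_coords_general v i j hij
end
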